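/- Let d ≥ 1 and let p be an admissible triple of exponents. Then there exist constants c, C > 0, depending only on d and p, such that for every 2d×2d real matrix A, c ‖AᵀJA‖² ≤ ∬_{ℝ^{2d}×ℝ^{2d}} g_1(x) g_2(y) g_3(x+y) σ(Ax,Ay)² dx dy ≤ C ‖AᵀJA‖². -/

import Mathlib

open MeasureTheory Filter Matrix
open scoped Real ENNReal BigOperators InnerProductSpace

noncomputable section

namespace Stability

/-- Euclidean space `ℝ^n`. -/
abbrev E (n : ℕ) : Type := EuclideanSpace ℝ (Fin n)

/-- The underlying space `ℝ^{2d} × ℝ` of the Heisenberg group `ℍ^d`. -/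
abbrev H (d : ℕ) : Type := E (2 * d) × ℝ

/-- A triple of exponents `p ∈ (1,∞)^3` is admissible if `∑ 1/p_j = 2`. -/
def IsAdmissible (p : Fin 3 → ℝ) : Prop :=
  (∀ j, 1 < p j) ∧ (∑ j, (p j)⁻¹) = 2

/-- Conjugate exponent `p' = p/(p-1)`. -/
def conjExp (q : ℝ) : ℝ := q / (q - 1)

/-- The sharp Young constant `A_p`. -/
def youngA (p : Fin 3 → ℝ) : ℝ :=
  ∏ j, (p j) ^ (1 / (2 * p j)) / (conjExp (p j)) ^ (1 / (2 * conjExp (p j)))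

/-- `γ_j = π p_j'`. -/
def γexp (p : Fin 3 → ℝ) (j : Fin 3) : ℝ := Real.pi * conjExp (p j)

/-- The `L^q` norm (for a real exponent `q`) of a complex-valued function. -/
def Lnorm {α : Type*} [MeasureSpace α] (q : ℝ) (f : α → ℂ) : ℝ :=
  (∫ z, ‖f z‖ ^ q) ^ (1 / q)

/-- Membership of a triple of functions in `L^p = L^{p_1} × L^{p_2} × L^{p_3}`. -/
def MemLpT {α : Type*} [MeasureSpace α] (p : Fin 3 → ℝ) (f : Fin 3 → α → ℂ) : Prop :=
  ∀ j, MemLp (f j) (ENNReal.ofReal (p j)) volume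

/-- Maximum of a triple of reals. -/
def tmax (u : Fin 3 → ℝ) : ℝ := max (u 0) (max (u 1) (u 2))

/-- `‖f‖_p := max_j ‖f_j‖_{p_j}` for a triple of functions. -/
def tnorm {α : Type*} [MeasureSpace α] (p : Fin 3 → ℝ) (f : Fin 3 → α → ℂ) : ℝ :=
  tmax fun j => Lnorm (p j) (f j)

/-- The real Gaussian `exp(-γ_j |z|²)` on `ℝ^n`. -/
def gaussER (n : ℕ) (p : Fin 3 → ℝ) (j : Fin 3) : E n → ℝ :=
  fun z => Real.exp (-(γexp p j * ‖z‖ ^ 2))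

/-- The Gaussian `g_j(z) = exp(-γ_j |z|²)` on `ℝ^n`, as a complex-valued function. -/
def gaussE (n : ℕ) (p : Fin 3 → ℝ) (j : Fin 3) : E n → ℂ :=
  fun z => Complex.ofReal (gaussER n p j z)

/-- The trilinear form for convolution on `ℝ^n`. -/
def Tconv (n : ℕ) (f : Fin 3 → E n → ℂ) : ℂ :=
  ∫ x : E n, ∫ y : E n, f 0 x * f 1 y * f 2 (-x - y)

/-- Action of a matrix on `ℝ^n`. -/
def mapp {n : ℕ} (M : Matrix (Fin n) (Fin n) ℝ) (x : E n) : E n :=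
  Matrix.toEuclideanLin M x

/-- The (Euclidean) operator norm of a matrix. -/
def opNorm {n : ℕ} (M : Matrix (Fin n) (Fin n) ℝ) : ℝ :=
  ‖LinearMap.toContinuousLinearMap (Matrix.toEuclideanLin M)‖

/-- The standard symplectic form `σ(x,y) = ∑_{j<d} (x_j y_{j+d} - x_{j+d} y_j)` on `ℝ^{2d}`. -/
def symp (d : ℕ) (x y : E (2 * d)) : ℝ :=
  ∑ j : Fin d, (x ⟨j.1, by have := j.2; omega⟩ * y ⟨j.1 + d, by have := j.2; omega⟩
    - x ⟨j.1 + d, by have := j.2; omega⟩ * y ⟨j.1, by have := j.2; omega⟩)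

/-- The matrix `J` with `σ(x,y) = x ⬝ (J y)`. -/
def Jmat (d : ℕ) : Matrix (Fin (2 * d)) (Fin (2 * d)) ℝ :=
  Matrix.of fun i k =>
    if i.1 < d ∧ k.1 = i.1 + d then 1 else if k.1 + d = i.1 then -1 else 0

/-- A symplectic matrix. -/
def IsSymplectic (d : ℕ) (S : Matrix (Fin (2 * d)) (Fin (2 * d)) ℝ) : Prop :=
  ∀ x y : E (2 * d), symp d (mapp S x) (mapp S y) = symp d x y

/-- The Heisenberg group law `(x,t)·(x',t') = (x+x', t+t'+σ(x,x'))`. -/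
def hMul (d : ℕ) (z w : H d) : H d := (z.1 + w.1, z.2 + w.2 + symp d z.1 w.1)

/-- Inversion `(x,t)⁻¹ = (-x,-t)` in the Heisenberg group. -/
def hInv (d : ℕ) (z : H d) : H d := (-z.1, -z.2)

/-- The trilinear form for convolution on the Heisenberg group `ℍ^d`. -/
def THeis (d : ℕ) (f : Fin 3 → H d → ℂ) : ℂ :=
  ∫ z1 : H d, ∫ z2 : H d, f 0 z1 * f 1 z2 * f 2 (hMul d (hInv d z2) (hInv d z1))

/-- The generators of the symmetry group `Σ(T_{ℍ^d})`: scalings, dilations, translations,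
the diagonal action of the symplectic group, shear transformations, and modulations in `x`.
Each family of generators is closed under inversion, so the closure of this set under
composition is exactly the group generated by these symmetries. -/
def heisGens (d : ℕ) : Set (Function.End (Fin 3 → H d → ℂ)) :=
  {Ψ | (∃ a : Fin 3 → ℂ, (∀ j, a j ≠ 0) ∧ Ψ = fun f j z => a j * f j z) ∨
       (∃ r : ℝ, 0 < r ∧ Ψ = fun f j z => f j (r • z.1, r ^ 2 * z.2)) ∨
       (∃ u : Fin 3 → H d, Ψ = fun f j z => f j (hMul d (hMul d (u j) z) (hInv d (u (j + 1))))) ∨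
       (∃ S, IsSymplectic d S ∧ Ψ = fun f j z => f j (mapp S z.1, z.2)) ∨
       (∃ φ : E (2 * d) →ₗ[ℝ] ℝ, Ψ = fun f j z => f j (z.1, z.2 + φ z.1)) ∨
       (∃ u : E (2 * d), Ψ = fun f j z => Complex.exp (Complex.I * Complex.ofReal ⟪u, z.1⟫_ℝ) * f j z)}

/-- The symmetry group `Σ(T_{ℍ^d})` (as a monoid of transformations; since the generating
set is closed under inversion this coincides with the generated group). -/
def heisSym (d : ℕ) : Submonoid (Function.End (Fin 3 → H d → ℂ)) :=
  Submonoid.closure (heisGens d)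

/-- The canonical Gaussian `G(x,t) = exp(-|Lx|² - a t² + i b t)` on `ℍ^d`. -/
def canonGauss (d : ℕ) (L : Matrix (Fin (2 * d)) (Fin (2 * d)) ℝ) (a b : ℝ) : H d → ℂ :=
  fun z => Complex.exp (Complex.ofReal (-(‖mapp L z.1‖ ^ 2) - a * z.2 ^ 2) +
    Complex.I * Complex.ofReal (b * z.2))

/-- The parameters `(L,a,b)` define a canonical `ε`-diffuse Gaussian. -/
def IsCanonDiffuse (d : ℕ) (ε : ℝ) (L : Matrix (Fin (2 * d)) (Fin (2 * d)) ℝ)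
    (a b : ℝ) : Prop :=
  0 < a ∧ IsUnit L.det ∧ max (max a (Real.sqrt a)) b * opNorm L⁻¹ < ε

/-- `G` is an `ε`-diffuse, `p`-compatible ordered triple of Gaussians: `G = Ψ G̃` for a
symmetry `Ψ ∈ Σ(T_{ℍ^d})` and a `p`-compatible triple `G̃` of canonical `ε`-diffuse
Gaussians, i.e. `G̃_j = exp(-|L_j x|² - a_j t² + i b_j t)` with `L_j = γ_j^{1/2} L`,
`a_j = γ_j a`, `b_j = b`. -/
def IsCompatibleDiffuse (d : ℕ) (p : Fin 3 → ℝ) (ε : ℝ) (G : Fin 3 → H d → ℂ) : Prop :=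
  ∃ Ψ ∈ heisSym d, ∃ L : Matrix (Fin (2 * d)) (Fin (2 * d)) ℝ, ∃ a b : ℝ,
    (∀ j, IsCanonDiffuse d ε (Real.sqrt (γexp p j) • L) (γexp p j * a) b) ∧
    G = Ψ (fun j => canonGauss d (Real.sqrt (γexp p j) • L) (γexp p j * a) b)

/-- The real Gaussian `exp(-γ_j(|x|²+t²))` on `ℝ^{2d} × ℝ`. -/
def gaussHR (d : ℕ) (p : Fin 3 → ℝ) (j : Fin 3) : H d → ℝ :=
  fun z => Real.exp (-(γexp p j * (‖z.1‖ ^ 2 + z.2 ^ 2)))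

/-- The Gaussian `g_j(x,t) = exp(-γ_j(|x|²+t²))` on `ℝ^{2d} × ℝ`, complex-valued. -/
def gaussH (d : ℕ) (p : Fin 3 → ℝ) (j : Fin 3) : H d → ℂ :=
  fun z => Complex.ofReal (gaussHR d p j z)

/-- The generalized trilinear form `T(f,A,b)`. -/
def Tgen (d : ℕ) (f : Fin 3 → H d → ℂ) (A : Matrix (Fin (2 * d)) (Fin (2 * d)) ℝ)
    (b : ℝ) : ℂ :=
  ∫ z1 : H d, ∫ z2 : H d,
    f 0 z1 * f 1 z2 *
      f 2 (-(z1.1 + z2.1), -(z1.2 + z2.2 + symp d (mapp A z1.1) (mapp A z2.1))) *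
      Complex.exp (Complex.I * Complex.ofReal (b * symp d (mapp A z1.1) (mapp A z2.1)))

/-- The group law `(x,t)·_A(x',t') = (x+x', t+t'+σ(Ax,Ax'))`. -/
def hMulA (d : ℕ) (A : Matrix (Fin (2 * d)) (Fin (2 * d)) ℝ) (z w : H d) : H d :=
  (z.1 + w.1, z.2 + w.2 + symp d (mapp A z.1) (mapp A w.1))

/-- The state space on which the symmetries of `T(f,A,b)` act: a triple of functions
together with the attached parameters `(A,b)`. -/
abbrev X (d : ℕ) : Type :=
  (Fin 3 → H d → ℂ) × Matrix (Fin (2 * d)) (Fin (2 * d)) ℝ × ℝ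

/-- The generators of `𝔊₀`: the diagonal `GL(2d)` action and modulation in the last
coordinate. Each family is closed under inversion. -/
def G0gens (d : ℕ) : Set (Function.End (X d)) :=
  {Ψ | (∃ L : Matrix (Fin (2 * d)) (Fin (2 * d)) ℝ, IsUnit L.det ∧
          Ψ = fun s => (fun j z => s.1 j (mapp L z.1, z.2), s.2.1 * L, s.2.2)) ∨
       (∃ ξ : ℝ,
          Ψ = fun s => (fun j z => Complex.exp (Complex.I * Complex.ofReal (ξ * z.2)) * s.1 j z,
            s.2.1, s.2.2 + ξ))}

/-- The group `𝔊₀` (as a monoid of transformations; the generating set is closed under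
inversion so this coincides with the generated group). -/
def G0 (d : ℕ) : Submonoid (Function.End (X d)) := Submonoid.closure (G0gens d)

/-- The generators of `𝔊₁`: scalings, dilations, translation–modulation symmetries,
the diagonal symplectic action, shears, and modulations in `x`. -/
def G1gens (d : ℕ) : Set (Function.End (X d)) :=
  {Ψ | (∃ a : Fin 3 → ℂ, (∀ j, a j ≠ 0) ∧
          Ψ = fun s => (fun j z => a j * s.1 j z, s.2.1, s.2.2)) ∨
       (∃ r : ℝ, 0 < r ∧
          Ψ = fun s => (fun j z => s.1 j (r • z.1, r ^ 2 * z.2), s.2.1, r ^ 2 * s.2.2)) ∨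
       (∃ U : Fin 3 → H d,
          Ψ = fun s => (fun j z =>
            (if j = 0 then
                Complex.exp (Complex.I * Complex.ofReal
                  ⟪(-(s.2.2)) • mapp ((s.2.1)ᵀ * Jmat d * s.2.1) ((U 1).1 - (U 2).1), z.1⟫_ℝ)
             else if j = 1 then
                Complex.exp (Complex.I * Complex.ofReal
                  ⟪(-(s.2.2)) • mapp (((s.2.1)ᵀ * Jmat d * s.2.1)ᵀ) ((U 0).1 - (U 1).1), z.1⟫_ℝ)
             else 1) *
            s.1 j (hMulA d s.2.1 (hMulA d s.2.1 (U j) z) (hInv d (U (j + 1)))),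
           s.2.1, s.2.2)) ∨
       (∃ S, IsSymplectic d S ∧
          Ψ = fun s => (fun j z => s.1 j (mapp S z.1, z.2), s.2.1, s.2.2)) ∨
       (∃ φ : E (2 * d) →ₗ[ℝ] ℝ,
          Ψ = fun s => (fun j z => s.1 j (z.1, z.2 + φ z.1), s.2.1, s.2.2)) ∨
       (∃ u : E (2 * d),
          Ψ = fun s => (fun j z => Complex.exp (Complex.I * Complex.ofReal ⟪u, z.1⟫_ℝ) * s.1 j z,
            s.2.1, s.2.2))}

/-- The group `𝔊₁` (as a monoid of transformations; the generating set is closed under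
inversion so this coincides with the generated group). -/
def G1 (d : ℕ) : Submonoid (Function.End (X d)) := Submonoid.closure (G1gens d)

/-- The orbit `Õ(f,A,b)`: all `Ψ₀ Ψ₁ ((e^{-ibt} f) ∘ A⁻¹, Id, 0)` with `Ψ₀ ∈ 𝔊₀`,
`Ψ₁ ∈ 𝔊₁`. -/
def tildeO (d : ℕ) (f : Fin 3 → H d → ℂ) (A : Matrix (Fin (2 * d)) (Fin (2 * d)) ℝ)
    (b : ℝ) : Set (X d) :=
  {y | ∃ Ψ₀ ∈ G0 d, ∃ Ψ₁ ∈ G1 d,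
    y = Ψ₀ (Ψ₁ (fun j z => Complex.exp (-(Complex.I * Complex.ofReal (b * z.2))) *
          f j (mapp A⁻¹ z.1, z.2), 1, 0))}

/-- The squared distance `dist_p(Õ(f,A,b),(g,0,0))²`. -/
def distSq (d : ℕ) (p : Fin 3 → ℝ) (f : Fin 3 → H d → ℂ)
    (A : Matrix (Fin (2 * d)) (Fin (2 * d)) ℝ) (b : ℝ) : ℝ :=
  sInf ((fun y => (tmax fun j => Lnorm (p j) (y.1 j - gaussH d p j)) ^ 2
      + opNorm ((y.2.1)ᵀ * Jmat d * y.2.1) ^ 2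
      + y.2.2 ^ 2 * opNorm ((y.2.1)ᵀ * Jmat d * y.2.1) ^ 2) '' tildeO d f A b)

/-- The group–structure difference form `T'`. -/
def T'op (d : ℕ) (A : Matrix (Fin (2 * d)) (Fin (2 * d)) ℝ) (h : Fin 3 → H d → ℂ) : ℂ :=
  ∫ z1 : H d, ∫ z2 : H d, h 0 z1 * h 1 z2 *
    (h 2 (-(z1.1 + z2.1), -(z1.2 + z2.2 + symp d (mapp A z1.1) (mapp A z2.1)))
      - h 2 (-(z1.1 + z2.1), -(z1.2 + z2.2)))

/-- The twisting–factor difference form `T''`. -/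
def T''op (d : ℕ) (A : Matrix (Fin (2 * d)) (Fin (2 * d)) ℝ) (b : ℝ)
    (h : Fin 3 → H d → ℂ) : ℂ :=
  ∫ z1 : H d, ∫ z2 : H d, h 0 z1 * h 1 z2 *
    h 2 (-(z1.1 + z2.1), -(z1.2 + z2.2 + symp d (mapp A z1.1) (mapp A z2.1))) *
    (Complex.exp (Complex.I * Complex.ofReal (b * symp d (mapp A z1.1) (mapp A z2.1))) - 1)

/-- The part `f_♯` of `f`: `f_♯(z) = f(z)` when `|f(z)| ≤ η g(z)`, else `0`. -/
def fSharp {α : Type*} (η : ℝ) (gR : α → ℝ) (f : α → ℂ) : α → ℂ :=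
  fun z => if ‖f z‖ ≤ η * gR z then f z else 0

/-- The part `f_♭ = f - f_♯`. -/
def fFlat {α : Type*} (η : ℝ) (gR : α → ℝ) (f : α → ℂ) : α → ℂ :=
  fun z => f z - fSharp η gR f z

/-- The generators of the symmetry group of convolution on `ℝ^n`: scalings, translations
(with `v₁+v₂+v₃ = 0`), common modulations, and the diagonal `GL(n)` action. Each family
is closed under inversion. -/
def euclGens (n : ℕ) : Set (Function.End (Fin 3 → E n → ℂ)) :=
  {Ψ | (∃ a : Fin 3 → ℂ, (∀ j, a j ≠ 0) ∧ Ψ = fun f j x => a j * f j x) ∨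
       (∃ v : Fin 3 → E n, v 0 + v 1 + v 2 = 0 ∧ Ψ = fun f j x => f j (x + v j)) ∨
       (∃ ξ : E n, Ψ = fun f j x => Complex.exp (Complex.I * Complex.ofReal ⟪ξ, x⟫_ℝ) * f j x) ∨
       (∃ L : Matrix (Fin n) (Fin n) ℝ, IsUnit L.det ∧ Ψ = fun f j x => f j (mapp L x))}

/-- The symmetry group of Euclidean convolution (as a monoid of transformations; the
generating set is closed under inversion so this coincides with the generated group). -/
def euclSym (n : ℕ) : Submonoid (Function.End (Fin 3 → E n → ℂ)) :=
  Submonoid.closure (euclGens n)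

/-- The orbit `O(f)` of a triple under the symmetries of Euclidean convolution. -/
def euclOrbit (n : ℕ) (f : Fin 3 → E n → ℂ) : Set (Fin 3 → E n → ℂ) :=
  {h | ∃ Ψ ∈ euclSym n, h = Ψ f}

/-- `dist_p(O(f), g) = inf_{h ∈ O(f)} max_j ‖h_j - g_j‖_{p_j}`. -/
def euclDist (n : ℕ) (p : Fin 3 → ℝ) (f : Fin 3 → E n → ℂ) : ℝ :=
  sInf ((fun h => tmax fun j => Lnorm (p j) (h j - gaussE n p j)) '' euclOrbit n f)

/-- `P` is the family of normalized orthogonal polynomials `P_n^{(t)}`: for `t > 0`,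
`P_n^{(t)}` has degree `n`, positive leading coefficient, `‖P_n^{(t)} e^{-tπx²}‖_{L²} = 1`
and `P_n^{(t)} e^{-tπx²} ⊥ P_k^{(t)} e^{-tπx²}` for `k < n`. -/
def IsHermiteFamily (P : ℝ → ℕ → Polynomial ℝ) : Prop :=
  ∀ t : ℝ, 0 < t → ∀ n : ℕ,
    (P t n).degree = n ∧ 0 < (P t n).leadingCoeff ∧
    (∫ x : ℝ, ((P t n).eval x) ^ 2 * Real.exp (-(2 * t * Real.pi * x ^ 2))) = 1 ∧
    ∀ k : ℕ, k < n →
      (∫ x : ℝ, (P t n).eval x * (P t k).eval x * Real.exp (-(2 * t * Real.pi * x ^ 2))) = 0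

/-- `τ_j = p_j p_j' / 2`. -/
def τexp (p : Fin 3 → ℝ) (j : Fin 3) : ℝ := p j * conjExp (p j) / 2

/-- `⟨Re f_j, P_α^{(τ_j)} g_j^{p_j-1}⟩` on `ℝ^{2d+1}`. -/
def pairReE (d : ℕ) (p : Fin 3 → ℝ) (P : ℝ → ℕ → Polynomial ℝ)
    (f : Fin 3 → E (2 * d + 1) → ℂ) (j : Fin 3) (α : Fin (2 * d + 1) → ℕ) : ℝ :=
  ∫ z : E (2 * d + 1), (f j z).re * (∏ k, (P (τexp p j) (α k)).eval (z k)) *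
    (gaussER (2 * d + 1) p j z) ^ (p j - 1)

/-- `⟨Im f_j, P_α^{(τ_j)} g_j^{p_j-1}⟩` on `ℝ^{2d+1}`. -/
def pairImE (d : ℕ) (p : Fin 3 → ℝ) (P : ℝ → ℕ → Polynomial ℝ)
    (f : Fin 3 → E (2 * d + 1) → ℂ) (j : Fin 3) (α : Fin (2 * d + 1) → ℕ) : ℝ :=
  ∫ z : E (2 * d + 1), (f j z).im * (∏ k, (P (τexp p j) (α k)).eval (z k)) *
    (gaussER (2 * d + 1) p j z) ^ (p j - 1)

/-- The orthogonality conditions of the sharpened Young inequality, on `ℝ^{2d+1}`. -/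
def OrthCondsE (d : ℕ) (p : Fin 3 → ℝ) (P : ℝ → ℕ → Polynomial ℝ)
    (f : Fin 3 → E (2 * d + 1) → ℂ) : Prop :=
  (∀ j, pairReE d p P f j 0 = 0 ∧ pairImE d p P f j 0 = 0) ∧
  (∀ α : Fin (2 * d + 1) → ℕ, (∑ k, α k) = 1 →
      pairReE d p P f 0 α = 0 ∧ pairReE d p P f 1 α = 0 ∧ pairImE d p P f 2 α = 0) ∧
  (∀ α : Fin (2 * d + 1) → ℕ, (∑ k, α k) = 2 → pairReE d p P f 2 α = 0)

/-- The `k`-th coordinate of a point of `ℝ^{2d} × ℝ`, viewed as a point of `ℝ^{2d+1}`. -/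
def coordH (d : ℕ) (z : H d) (k : Fin (2 * d + 1)) : ℝ :=
  if h : (k : ℕ) < 2 * d then z.1 ⟨k, h⟩ else z.2

/-- `⟨Re f_j, P_α^{(τ_j)} g_j^{p_j-1}⟩` on `ℝ^{2d} × ℝ ≅ ℝ^{2d+1}`. -/
def pairReH (d : ℕ) (p : Fin 3 → ℝ) (P : ℝ → ℕ → Polynomial ℝ)
    (f : Fin 3 → H d → ℂ) (j : Fin 3) (α : Fin (2 * d + 1) → ℕ) : ℝ :=
  ∫ z : H d, (f j z).re * (∏ k, (P (τexp p j) (α k)).eval (coordH d z k)) *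
    (gaussHR d p j z) ^ (p j - 1)

/-- `⟨Im f_j, P_α^{(τ_j)} g_j^{p_j-1}⟩` on `ℝ^{2d} × ℝ ≅ ℝ^{2d+1}`. -/
def pairImH (d : ℕ) (p : Fin 3 → ℝ) (P : ℝ → ℕ → Polynomial ℝ)
    (f : Fin 3 → H d → ℂ) (j : Fin 3) (α : Fin (2 * d + 1) → ℕ) : ℝ :=
  ∫ z : H d, (f j z).im * (∏ k, (P (τexp p j) (α k)).eval (coordH d z k)) *
    (gaussHR d p j z) ^ (p j - 1)

/-- The orthogonality conditions, on `ℝ^{2d} × ℝ ≅ ℝ^{2d+1}`. -/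
def OrthCondsH (d : ℕ) (p : Fin 3 → ℝ) (P : ℝ → ℕ → Polynomial ℝ)
    (f : Fin 3 → H d → ℂ) : Prop :=
  (∀ j, pairReH d p P f j 0 = 0 ∧ pairImH d p P f j 0 = 0) ∧
  (∀ α : Fin (2 * d + 1) → ℕ, (∑ k, α k) = 1 →
      pairReH d p P f 0 α = 0 ∧ pairReH d p P f 1 α = 0 ∧ pairImH d p P f 2 α = 0) ∧
  (∀ α : Fin (2 * d + 1) → ℕ, (∑ k, α k) = 2 → pairReH d p P f 2 α = 0)

/-!
The symplectic form pulled back by `A` is `σ(Ax, Ay) = ⟪x, (AᵀJA) y⟫`, so the integral is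
`Q(T) = ∬ w(x, y) ⟪x, T y⟫²` at `T = AᵀJA`, where `w(x, y) = g₁(x) g₂(y) g₃(x + y)`.
Since `w` is continuous, everywhere positive and has finite fourth moments, `Q` is a continuous
function on the finite-dimensional space of operators, homogeneous of degree two and positive
away from `0`. Its extreme values on the (compact) unit sphere give the constants `c` and `C`.
-/

theorem exists_mul_norm_sq_le_of_homogeneous {V : Type*} [NormedAddCommGroup V]
    [NormedSpace ℝ V] [FiniteDimensional ℝ V] {q : V → ℝ} (hq : Continuous q)
    (hsmul : ∀ (c : ℝ) (v : V), q (c • v) = c ^ 2 * q v) (hpos : ∀ v, v ≠ 0 → 0 < q v) :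
    ∃ c C : ℝ, 0 < c ∧ 0 < C ∧ ∀ v, c * ‖v‖ ^ 2 ≤ q v ∧ q v ≤ C * ‖v‖ ^ 2 := by
  have hq0 : q 0 = 0 := by simpa using hsmul 0 0
  rcases subsingleton_or_nontrivial V with hV | hV
  · exact ⟨1, 1, one_pos, one_pos, fun v => by simp [Subsingleton.elim v 0, hq0]⟩
  have hS : (Metric.sphere (0 : V) 1).Nonempty := NormedSpace.sphere_nonempty.mpr zero_le_one
  obtain ⟨u, hu, hmin⟩ := (isCompact_sphere (0 : V) 1).exists_isMinOn hS hq.continuousOn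
  obtain ⟨U, hU, hmax⟩ := (isCompact_sphere (0 : V) 1).exists_isMaxOn hS hq.continuousOn
  have hne : ∀ v ∈ Metric.sphere (0 : V) 1, v ≠ 0 := fun v hv =>
    ne_zero_of_norm_ne_zero (by simp_all)
  refine ⟨q u, q U, hpos u (hne u hu), hpos U (hne U hU), fun v => ?_⟩
  rcases eq_or_ne v 0 with rfl | hv
  · simp [hq0]
  have hunit : ‖v‖⁻¹ • v ∈ Metric.sphere (0 : V) 1 := by
    simpa using norm_smul_inv_norm (𝕜 := ℝ) hv
  have hscale : q v = ‖v‖ ^ 2 * q (‖v‖⁻¹ • v) := by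
    rw [← hsmul, smul_inv_smul₀ (norm_ne_zero_iff.mpr hv)]
  rw [hscale, mul_comm (q u), mul_comm (q U)]
  exact ⟨by gcongr; exact hmin hunit, by gcongr; exact hmax hunit⟩

section WeightedInnerSq

variable {F : Type*} [NormedAddCommGroup F] [InnerProductSpace ℝ F]

theorem inner_apply_sq_le (T : F →L[ℝ] F) (x y : F) :
    ⟪x, T y⟫_ℝ ^ 2 ≤ ‖T‖ ^ 2 * (‖x‖ ^ 2 * ‖y‖ ^ 2) := by
  have h : |⟪x, T y⟫_ℝ| ≤ ‖T‖ * (‖x‖ * ‖y‖) :=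
    calc |⟪x, T y⟫_ℝ| ≤ ‖x‖ * ‖T y‖ := abs_real_inner_le_norm _ _
      _ ≤ ‖x‖ * (‖T‖ * ‖y‖) := by gcongr; exact T.le_opNorm y
      _ = ‖T‖ * (‖x‖ * ‖y‖) := by ring
  calc ⟪x, T y⟫_ℝ ^ 2 = |⟪x, T y⟫_ℝ| ^ 2 := (sq_abs _).symm
    _ ≤ (‖T‖ * (‖x‖ * ‖y‖)) ^ 2 := by gcongr
    _ = ‖T‖ ^ 2 * (‖x‖ ^ 2 * ‖y‖ ^ 2) := by ring

theorem norm_mul_inner_apply_sq_le {a : ℝ} (ha : 0 ≤ a) (T : F →L[ℝ] F) (x y : F) :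
    ‖a * ⟪x, T y⟫_ℝ ^ 2‖ ≤ ‖T‖ ^ 2 * (a * (‖x‖ ^ 2 * ‖y‖ ^ 2)) := by
  rw [Real.norm_of_nonneg (by positivity), mul_left_comm]
  exact mul_le_mul_of_nonneg_left (inner_apply_sq_le T x y) ha

variable [MeasurableSpace F]

def weightedInnerSq (w : F × F → ℝ) (μ : Measure (F × F)) (T : F →L[ℝ] F) : ℝ :=
  ∫ z, w z * ⟪z.1, T z.2⟫_ℝ ^ 2 ∂μ

variable {w : F × F → ℝ} {μ : Measure (F × F)}

theorem weightedInnerSq_smul (c : ℝ) (T : F →L[ℝ] F) :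
    weightedInnerSq w μ (c • T) = c ^ 2 * weightedInnerSq w μ T := by
  simp only [weightedInnerSq, _root_.smul_apply, real_inner_smul_right, ← integral_const_mul]
  congr 1 with z
  ring

variable [BorelSpace F] [SecondCountableTopology F]

theorem integrable_mul_inner_apply_sq (hw : Continuous w) (hw0 : ∀ z, 0 ≤ w z)
    (hmom : Integrable (fun z => w z * (‖z.1‖ ^ 2 * ‖z.2‖ ^ 2)) μ) (T : F →L[ℝ] F) :
    Integrable (fun z => w z * ⟪z.1, T z.2⟫_ℝ ^ 2) μ :=
  (hmom.const_mul (‖T‖ ^ 2)).mono' (by fun_prop)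
    (.of_forall fun z => norm_mul_inner_apply_sq_le (hw0 z) T z.1 z.2)

theorem continuous_weightedInnerSq (hw : Continuous w) (hw0 : ∀ z, 0 ≤ w z)
    (hmom : Integrable (fun z => w z * (‖z.1‖ ^ 2 * ‖z.2‖ ^ 2)) μ) :
    Continuous (weightedInnerSq w μ) := by
  refine continuous_iff_continuousAt.mpr fun T₀ => continuousAt_of_dominated
    (bound := fun z => (‖T₀‖ + 1) ^ 2 * (w z * (‖z.1‖ ^ 2 * ‖z.2‖ ^ 2)))
    (.of_forall fun T => (integrable_mul_inner_apply_sq hw hw0 hmom T).aestronglyMeasurable)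
    ?_ (hmom.const_mul _) (.of_forall fun z => by fun_prop)
  filter_upwards [(continuous_norm.tendsto T₀).eventually (gt_mem_nhds (lt_add_one ‖T₀‖))]
    with T hT
  refine .of_forall fun z => (norm_mul_inner_apply_sq_le (hw0 z) T z.1 z.2).trans ?_
  have := hw0 z
  gcongr

theorem weightedInnerSq_pos [μ.IsOpenPosMeasure] (hw : Continuous w) (hwpos : ∀ z, 0 < w z)
    (hmom : Integrable (fun z => w z * (‖z.1‖ ^ 2 * ‖z.2‖ ^ 2)) μ) {T : F →L[ℝ] F}
    (hT : T ≠ 0) : 0 < weightedInnerSq w μ T := by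
  have hw0 z := (hwpos z).le
  rw [weightedInnerSq, integral_pos_iff_support_of_nonneg
    (fun z => mul_nonneg (hw0 z) (sq_nonneg _)) (integrable_mul_inner_apply_sq hw hw0 hmom T)]
  obtain ⟨y, hy⟩ : ∃ y, T y ≠ 0 := by
    by_contra! h
    exact hT (ContinuousLinearMap.ext h)
  have hcont : Continuous fun z : F × F => w z * ⟪z.1, T z.2⟫_ℝ ^ 2 := by fun_prop
  refine hcont.isOpen_support.measure_pos μ ⟨(T y, y), ?_⟩
  simpa [real_inner_self_eq_norm_sq] using ⟨(hwpos _).ne', hy⟩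

theorem exists_weightedInnerSq_bounds [FiniteDimensional ℝ F] [μ.IsOpenPosMeasure]
    (hw : Continuous w) (hwpos : ∀ z, 0 < w z)
    (hmom : Integrable (fun z => w z * (‖z.1‖ ^ 2 * ‖z.2‖ ^ 2)) μ) :
    ∃ c C : ℝ, 0 < c ∧ 0 < C ∧ ∀ T : F →L[ℝ] F,
      c * ‖T‖ ^ 2 ≤ weightedInnerSq w μ T ∧ weightedInnerSq w μ T ≤ C * ‖T‖ ^ 2 :=
  exists_mul_norm_sq_le_of_homogeneous
    (continuous_weightedInnerSq hw (fun z => (hwpos z).le) hmom) weightedInnerSq_smul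
    fun _ => weightedInnerSq_pos hw hwpos hmom

end WeightedInnerSq

theorem integrable_exp_neg_mul_sq_norm {V : Type*} [NormedAddCommGroup V] [InnerProductSpace ℝ V]
    [FiniteDimensional ℝ V] [MeasurableSpace V] [BorelSpace V] {b : ℝ} (hb : 0 < b) :
    Integrable fun x : V => Real.exp (-(b * ‖x‖ ^ 2)) := by
  refine Integrable.of_integral_ne_zero ?_
  simp_rw [← neg_mul]
  rw [GaussianFourier.integral_rexp_neg_mul_sq_norm hb]
  positivity

theorem integrable_sq_norm_mul_exp_neg_mul_sq_norm {V : Type*} [NormedAddCommGroup V]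
    [InnerProductSpace ℝ V] [FiniteDimensional ℝ V] [MeasurableSpace V] [BorelSpace V] {b : ℝ}
    (hb : 0 < b) : Integrable fun x : V => ‖x‖ ^ 2 * Real.exp (-(b * ‖x‖ ^ 2)) := by
  refine ((integrable_exp_neg_mul_sq_norm (half_pos hb)).const_mul (2 / b * Real.exp (-1))).mono'
    (by fun_prop) (.of_forall fun x => ?_)
  set y := b / 2 * ‖x‖ ^ 2
  rw [Real.norm_of_nonneg (by positivity)]
  calc ‖x‖ ^ 2 * Real.exp (-(b * ‖x‖ ^ 2)) = 2 / b * (y * Real.exp (-y)) * Real.exp (-y) := by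
        rw [mul_assoc (2 / b), mul_assoc y, ← Real.exp_add]
        simp only [y]
        field_simp
        ring_nf
    _ ≤ 2 / b * Real.exp (-1) * Real.exp (-y) := by
        gcongr
        exact Real.mul_exp_neg_le_exp_neg_one y

theorem γexp_pos {p : Fin 3 → ℝ} (hp : IsAdmissible p) (j : Fin 3) : 0 < γexp p j :=
  mul_pos Real.pi_pos (div_pos (by linarith [hp.1 j]) (by linarith [hp.1 j]))

def gaussWeight (n : ℕ) (p : Fin 3 → ℝ) (z : E n × E n) : ℝ :=
  gaussER n p 0 z.1 * gaussER n p 1 z.2 * gaussER n p 2 (z.1 + z.2)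

theorem gaussWeight_pos (n : ℕ) (p : Fin 3 → ℝ) (z : E n × E n) : 0 < gaussWeight n p z := by
  unfold gaussWeight gaussER
  positivity

theorem continuous_gaussWeight (n : ℕ) (p : Fin 3 → ℝ) : Continuous (gaussWeight n p) := by
  unfold gaussWeight gaussER
  fun_prop

theorem integrable_gaussWeight_mul_moment {n : ℕ} {p : Fin 3 → ℝ} (hp : IsAdmissible p) :
    Integrable fun z : E n × E n => gaussWeight n p z * (‖z.1‖ ^ 2 * ‖z.2‖ ^ 2) := by
  refine ((integrable_sq_norm_mul_exp_neg_mul_sq_norm (γexp_pos hp 0)).mul_prod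
    (integrable_sq_norm_mul_exp_neg_mul_sq_norm (γexp_pos hp 1))).mono'
    (by unfold gaussWeight gaussER; fun_prop) (.of_forall fun z => ?_)
  have hg₂ : gaussER n p 2 (z.1 + z.2) ≤ 1 :=
    Real.exp_le_one_iff.mpr (neg_nonpos.mpr (by have := γexp_pos hp 2; positivity))
  rw [Real.norm_of_nonneg (by have := gaussWeight_pos n p z; positivity)]
  calc gaussWeight n p z * (‖z.1‖ ^ 2 * ‖z.2‖ ^ 2)
      ≤ gaussER n p 0 z.1 * gaussER n p 1 z.2 * 1 * (‖z.1‖ ^ 2 * ‖z.2‖ ^ 2) := by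
        unfold gaussWeight gaussER at *
        gcongr
    _ = _ := by unfold gaussER; ring

theorem sum_fin_two_mul {M : Type*} [AddCommMonoid M] {d : ℕ} (f : Fin (2 * d) → M) :
    ∑ i, f i = ∑ j : Fin d, f ⟨j, by omega⟩ + ∑ j : Fin d, f ⟨j + d, by omega⟩ := by
  rw [← Fin.sum_congr' f (two_mul d).symm, Fin.sum_univ_add]
  congr 1
  refine Finset.sum_congr rfl fun j _ => congrArg f (Fin.ext ?_)
  simp [add_comm]

theorem mapp_Jmat_apply_fst_half {d : ℕ} (y : E (2 * d)) (j : Fin d) :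
    mapp (Jmat d) y ⟨j, by omega⟩ = y ⟨j + d, by omega⟩ := by
  have : ∀ k : Fin (2 * d), Jmat d ⟨j, by omega⟩ k = if k = ⟨j + d, by omega⟩ then 1 else 0 := by
    intro k
    simp only [Jmat, Matrix.of_apply, Fin.ext_iff]
    have := j.2
    split_ifs <;> first | rfl | (exfalso; omega)
  simp [mapp, Matrix.toLpLin_apply, Matrix.mulVec, dotProduct, this]

theorem mapp_Jmat_apply_snd_half {d : ℕ} (y : E (2 * d)) (j : Fin d) :
    mapp (Jmat d) y ⟨j + d, by omega⟩ = -y ⟨j, by omega⟩ := by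
  have : ∀ k : Fin (2 * d), Jmat d ⟨j + d, by omega⟩ k = if k = ⟨j, by omega⟩ then -1 else 0 := by
    intro k
    simp only [Jmat, Matrix.of_apply, Fin.ext_iff]
    have := j.2
    split_ifs <;> first | rfl | (exfalso; omega)
  simp [mapp, Matrix.toLpLin_apply, Matrix.mulVec, dotProduct, this]

theorem symp_eq_inner_mapp_Jmat {d : ℕ} (x y : E (2 * d)) :
    symp d x y = ⟪x, mapp (Jmat d) y⟫_ℝ := by
  rw [symp, PiLp.inner_apply, sum_fin_two_mul, ← Finset.sum_add_distrib]
  refine Finset.sum_congr rfl fun j _ => ?_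
  simp only [mapp_Jmat_apply_fst_half, mapp_Jmat_apply_snd_half, RCLike.inner_apply,
    Real.ringHom_apply]
  ring

theorem symp_mapp_eq_inner {d : ℕ} (A : Matrix (Fin (2 * d)) (Fin (2 * d)) ℝ) (x y : E (2 * d)) :
    symp d (mapp A x) (mapp A y) = ⟪x, mapp (Aᵀ * Jmat d * A) y⟫_ℝ := by
  simp only [symp_eq_inner_mapp_Jmat, mapp, Matrix.toLpLin_apply,
    EuclideanSpace.inner_eq_star_dotProduct]
  simp [Matrix.dotProduct_mulVec, ← Matrix.mulVec_transpose, Matrix.mulVec_mulVec, Matrix.mul_assoc]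

theorem integral_integral_gaussER_mul_symp_sq {d : ℕ} {p : Fin 3 → ℝ} (hp : IsAdmissible p)
    (A : Matrix (Fin (2 * d)) (Fin (2 * d)) ℝ) :
    (∫ x : E (2 * d), ∫ y : E (2 * d),
      gaussER (2 * d) p 0 x * gaussER (2 * d) p 1 y * gaussER (2 * d) p 2 (x + y) *
        symp d (mapp A x) (mapp A y) ^ 2) =
      weightedInnerSq (gaussWeight (2 * d) p) volume
        (LinearMap.toContinuousLinearMap (Matrix.toEuclideanLin (Aᵀ * Jmat d * A))) := by
  set T := LinearMap.toContinuousLinearMap (Matrix.toEuclideanLin (Aᵀ * Jmat d * A))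
  simp_rw [symp_mapp_eq_inner]
  exact (integral_prod _ (integrable_mul_inner_apply_sq (continuous_gaussWeight (2 * d) p)
    (fun z => (gaussWeight_pos (2 * d) p z).le) (integrable_gaussWeight_mul_moment hp) T)).symm

theorem statement7_general (d : ℕ) (p : Fin 3 → ℝ) (hp : IsAdmissible p) :
    ∃ c C : ℝ, 0 < c ∧ 0 < C ∧ ∀ A : Matrix (Fin (2 * d)) (Fin (2 * d)) ℝ,
      c * opNorm (Aᵀ * Jmat d * A) ^ 2 ≤
        (∫ x : E (2 * d), ∫ y : E (2 * d),
          gaussER (2 * d) p 0 x * gaussER (2 * d) p 1 y * gaussER (2 * d) p 2 (x + y) *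
            symp d (mapp A x) (mapp A y) ^ 2) ∧
      (∫ x : E (2 * d), ∫ y : E (2 * d),
          gaussER (2 * d) p 0 x * gaussER (2 * d) p 1 y * gaussER (2 * d) p 2 (x + y) *
            symp d (mapp A x) (mapp A y) ^ 2) ≤
        C * opNorm (Aᵀ * Jmat d * A) ^ 2 := by
  obtain ⟨c, C, hc, hC, hbounds⟩ := exists_weightedInnerSq_bounds (μ := volume)
    (continuous_gaussWeight (2 * d) p) (gaussWeight_pos (2 * d) p)
    (integrable_gaussWeight_mul_moment hp)
  refine ⟨c, C, hc, hC, fun A => ?_⟩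
  rw [integral_integral_gaussER_mul_symp_sq hp A]
  exact hbounds _

/-- Size of the second-order symplectic term. -/
theorem statement7 (d : ℕ) (hd : 1 ≤ d) (p : Fin 3 → ℝ) (hp : IsAdmissible p) :
    ∃ c C : ℝ, 0 < c ∧ 0 < C ∧ ∀ A : Matrix (Fin (2 * d)) (Fin (2 * d)) ℝ,
      c * opNorm (Aᵀ * Jmat d * A) ^ 2 ≤
        (∫ x : E (2 * d), ∫ y : E (2 * d),
          gaussER (2 * d) p 0 x * gaussER (2 * d) p 1 y * gaussER (2 * d) p 2 (x + y) *
            symp d (mapp A x) (mapp A y) ^ 2) ∧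
      (∫ x : E (2 * d), ∫ y : E (2 * d),
          gaussER (2 * d) p 0 x * gaussER (2 * d) p 1 y * gaussER (2 * d) p 2 (x + y) *
            symp d (mapp A x) (mapp A y) ^ 2) ≤
        C * opNorm (Aᵀ * Jmat d * A) ^ 2 :=
  statement7_general d p hp

end Stability
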